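/- arXiv:0907.0487 — 4 statements merged into one kernel-verified Lean document; each statement's English description precedes it below -/
import Mathlib

section
/- As N → ∞, E[δ_N] = (2π)^{−1/2} log N + O(1); that is, the sequence E[δ_N] − (2π)^{−1/2} log N is bounded. -/
open MeasureTheory ProbabilityTheory Finset Real
open scoped ENNReal

/-! `S(2i, 2i)` is a sum of `4i²` independent signs, so it vanishes with probability
`p(2i²) = C(4i², 2i²) / 4^(2i²)`. Wallis' product pins `p(n)²` between `2 / (π (2n + 1))` and
`1 / (π n)`, which at `n = 2i²` gives `p(2i²) = 1 / (√(2π) i) + O(1 / i²)`. Summing over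
`i ≤ N`, the errors are summable and the main terms give `(2π)^(-1/2)` times the harmonic number,
which is `log N + O(1)`. -/

/-- `P(W_n = k)` for the simple random walk `W`: exactly `(n - k) / 2` of the `n` steps are `-1`. -/
noncomputable def simpleWalkMass (n : ℕ) (k : ℤ) : ℝ≥0∞ :=
  if k ≤ n ∧ Even ((n : ℤ) - k) then (n.choose (((n : ℤ) - k).toNat / 2) : ℝ≥0∞) / 2 ^ n else 0

lemma simpleWalkMass_zero (k : ℤ) : simpleWalkMass 0 k = if k = 0 then 1 else 0 := by
  rcases eq_or_ne k 0 with rfl | hk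
  · simp [simpleWalkMass]
  · rw [if_neg hk, simpleWalkMass]
    split_ifs with h
    · rw [Int.even_iff] at h
      rw [Nat.choose_eq_zero_of_lt (by omega), Nat.cast_zero, ENNReal.zero_div]
    · rfl

lemma simpleWalkMass_succ (n : ℕ) (k : ℤ) :
    simpleWalkMass (n + 1) k = simpleWalkMass n (k - 1) / 2 + simpleWalkMass n (k + 1) / 2 := by
  have halve (c : ℕ) : (c : ℝ≥0∞) / 2 ^ n / 2 = c / 2 ^ (n + 1) := by
    rw [div_eq_mul_inv, div_eq_mul_inv, div_eq_mul_inv, mul_assoc, ENNReal.inv_pow,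
      ENNReal.inv_pow, pow_succ]
  by_cases h : ∃ j : ℕ, (n : ℤ) + 1 - k = 2 * j
  · obtain ⟨j, hj⟩ := h
    rcases j with _ | j
    · have hleft : simpleWalkMass n (k - 1) = 1 / 2 ^ n := by
        rw [simpleWalkMass, if_pos ⟨by omega, ⟨0, by omega⟩⟩]
        simp [show ((n : ℤ) - (k - 1)).toNat = 0 by omega]
      have hright : simpleWalkMass n (k + 1) = 0 := by
        rw [simpleWalkMass, if_neg (by omega)]
      rw [simpleWalkMass, if_pos ⟨by omega, ⟨0, by push_cast; omega⟩⟩, hleft, hright,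
        show ((n + 1 : ℕ) - k : ℤ).toNat = 0 by omega]
      simpa using (halve 1).symm
    · have hleft : simpleWalkMass n (k - 1) = n.choose (j + 1) / 2 ^ n := by
        rw [simpleWalkMass, if_pos ⟨by omega, ⟨j + 1, by omega⟩⟩,
          show ((n : ℤ) - (k - 1)).toNat / 2 = j + 1 by omega]
      have hright : simpleWalkMass n (k + 1) = n.choose j / 2 ^ n := by
        rw [simpleWalkMass, if_pos ⟨by omega, ⟨j, by omega⟩⟩,
          show ((n : ℤ) - (k + 1)).toNat / 2 = j by omega]
      rw [simpleWalkMass, if_pos ⟨by omega, ⟨j + 1, by push_cast; omega⟩⟩, hleft, hright,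
        show ((n + 1 : ℕ) - k : ℤ).toNat / 2 = j + 1 by omega, halve, halve,
        Nat.choose_succ_succ', Nat.cast_add, ENNReal.add_div, add_comm]
  · have hodd (m : ℕ) (l : ℤ) (t : ℕ) (hl : (m : ℤ) - l + 2 * t = n + 1 - k) :
        simpleWalkMass m l = 0 := by
      rw [simpleWalkMass, if_neg]
      rintro ⟨hle, r, hr⟩
      exact h ⟨r.toNat + t, by omega⟩
    rw [hodd (n + 1) k 0 (by push_cast; ring), hodd n (k - 1) 0 (by ring),
      hodd n (k + 1) 1 (by ring), ENNReal.zero_div, add_zero]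

lemma simpleWalkMass_two_mul_zero (m : ℕ) :
    simpleWalkMass (2 * m) 0 = m.centralBinom / 4 ^ m := by
  rw [simpleWalkMass, if_pos ⟨by omega, ⟨m, by push_cast; ring⟩⟩,
    show ((2 * m : ℕ) - 0 : ℤ).toNat / 2 = m by omega, Nat.centralBinom_eq_two_mul_choose, pow_mul]
  norm_num

section Rademacher

variable {Ω : Type*} [MeasurableSpace Ω] {μ : Measure Ω} [IsProbabilityMeasure μ]

lemma ae_eq_one_or_eq_neg_one {Y : Ω → ℤ} (hY : Measurable Y)
    (hY₁ : μ {ω | Y ω = 1} = 1 / 2) (hY₂ : μ {ω | Y ω = -1} = 1 / 2) :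
    ∀ᵐ ω ∂μ, Y ω = 1 ∨ Y ω = -1 := by
  have hdisj : Disjoint {ω | Y ω = 1} {ω | Y ω = -1} :=
    Set.disjoint_left.mpr fun ω h₁ h₂ => by simp_all
  have hfull : μ ({ω | Y ω = 1} ∪ {ω | Y ω = -1}) = 1 := by
    rw [measure_union hdisj (hY (measurableSet_singleton _)), hY₁, hY₂, ENNReal.add_halves]
  have hmeas : MeasurableSet ({ω | Y ω = 1} ∪ {ω | Y ω = -1}) :=
    (hY (measurableSet_singleton _)).union (hY (measurableSet_singleton _))
  exact (ae_mem_iff_measure_eq hmeas.nullMeasurableSet).mpr (by rw [hfull, measure_univ])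

lemma measure_add_eq_of_indepFun {Y Z : Ω → ℤ} (hY : Measurable Y) (hZ : Measurable Z)
    (hind : IndepFun Z Y μ)
    (hY₁ : μ {ω | Y ω = 1} = 1 / 2) (hY₂ : μ {ω | Y ω = -1} = 1 / 2) (k : ℤ) :
    μ {ω | Y ω + Z ω = k} = μ {ω | Z ω = k - 1} / 2 + μ {ω | Z ω = k + 1} / 2 := by
  have hsplit : {ω | Y ω + Z ω = k} =ᵐ[μ]
      (Z ⁻¹' {k - 1} ∩ Y ⁻¹' {1} ∪ Z ⁻¹' {k + 1} ∩ Y ⁻¹' {-1} : Set Ω) := by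
    filter_upwards [ae_eq_one_or_eq_neg_one hY hY₁ hY₂] with ω hω
    apply propext
    change Y ω + Z ω = k ↔ Z ω = k - 1 ∧ Y ω = 1 ∨ Z ω = k + 1 ∧ Y ω = -1
    omega
  have hdisj : Disjoint (Z ⁻¹' {k - 1} ∩ Y ⁻¹' {1}) (Z ⁻¹' {k + 1} ∩ Y ⁻¹' {-1}) :=
    Set.disjoint_left.mpr fun ω h₁ h₂ => by simp_all
  rw [measure_congr hsplit, measure_union hdisj ((hZ (measurableSet_singleton _)).inter
      (hY (measurableSet_singleton _))),
    hind.measure_inter_preimage_eq_mul _ _ (measurableSet_singleton _) (measurableSet_singleton _),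
    hind.measure_inter_preimage_eq_mul _ _ (measurableSet_singleton _) (measurableSet_singleton _)]
  simp only [Set.preimage, Set.mem_singleton_iff, hY₁, hY₂, mul_one_div]

lemma measure_sum_eq_simpleWalkMass {X : ℕ × ℕ → Ω → ℤ} (hmeas : ∀ q, Measurable (X q))
    (hindep : iIndepFun X μ)
    (hdist : ∀ q, μ {ω | X q ω = 1} = 1 / 2 ∧ μ {ω | X q ω = -1} = 1 / 2)
    (T : Finset (ℕ × ℕ)) (k : ℤ) :
    μ {ω | ∑ q ∈ T, X q ω = k} = simpleWalkMass T.card k := by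
  induction T using Finset.induction generalizing k with
  | empty =>
    rw [card_empty, simpleWalkMass_zero]
    split_ifs with hk <;> simp [hk, eq_comm]
  | @insert q T hq ih =>
    have hind : IndepFun (fun ω => ∑ p ∈ T, X p ω) (X q) μ := by
      simpa only [← Finset.sum_apply] using hindep.indepFun_finsetSum_of_notMem hmeas hq
    simp only [sum_insert hq, card_insert_of_notMem hq, simpleWalkMass_succ, ← ih]
    exact measure_add_eq_of_indepFun (hmeas q) (Finset.measurable_sum T fun p _ => hmeas p) hind
      (hdist q).1 (hdist q).2 k

end Rademacher

section CentralBinom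

open Real.Wallis

lemma centralBinom_div_four_pow_sq_mul_W (n : ℕ) :
    ((n.centralBinom : ℝ) / 4 ^ n) ^ 2 * ((2 * n + 1) * W n) = 1 := by
  have hfac := Nat.choose_mul_factorial_mul_factorial (show n ≤ 2 * n by omega)
  rw [show 2 * n - n = n by omega, ← Nat.centralBinom_eq_two_mul_choose] at hfac
  have hcast : ((2 * n).factorial : ℝ) = n.centralBinom * n.factorial * n.factorial := by
    exact_mod_cast hfac.symm
  rw [W_eq_factorial_ratio, hcast, show (2 : ℝ) ^ (4 * n) = 4 ^ n * 4 ^ n by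
    rw [← mul_pow, pow_mul]; norm_num]
  have : (n.centralBinom : ℝ) ≠ 0 := by exact_mod_cast (Nat.centralBinom_pos n).ne'
  field_simp

lemma pi_mul_mul_centralBinom_div_four_pow_sq_le (n : ℕ) :
    π * n * ((n.centralBinom : ℝ) / 4 ^ n) ^ 2 ≤ 1 := by
  have hW : π * n ≤ (2 * n + 1) * W n := by
    have h := mul_le_mul_of_nonneg_left (le_W n) (by positivity : (0 : ℝ) ≤ 2 * n + 1)
    refine le_trans ?_ h
    rw [div_mul_eq_mul_div, ← mul_div_assoc, le_div_iff₀ (by positivity)]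
    nlinarith [pi_pos]
  calc π * n * ((n.centralBinom : ℝ) / 4 ^ n) ^ 2
      ≤ (2 * n + 1) * W n * ((n.centralBinom : ℝ) / 4 ^ n) ^ 2 := by gcongr
    _ = 1 := by rw [mul_comm, centralBinom_div_four_pow_sq_mul_W]

lemma two_le_pi_mul_mul_centralBinom_div_four_pow_sq (n : ℕ) :
    2 ≤ π * (2 * n + 1) * ((n.centralBinom : ℝ) / 4 ^ n) ^ 2 := by
  calc (2 : ℝ) = 2 * (((n.centralBinom : ℝ) / 4 ^ n) ^ 2 * ((2 * n + 1) * W n)) := by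
        rw [centralBinom_div_four_pow_sq_mul_W, mul_one]
    _ ≤ 2 * (((n.centralBinom : ℝ) / 4 ^ n) ^ 2 * ((2 * n + 1) * (π / 2))) := by
        gcongr; exact W_le n
    _ = π * (2 * n + 1) * ((n.centralBinom : ℝ) / 4 ^ n) ^ 2 := by ring

end CentralBinom

lemma abs_centralBinom_two_mul_sq_div_four_pow_sub_le {i : ℕ} (hi : i ≠ 0) :
    |((2 * i ^ 2).centralBinom : ℝ) / 4 ^ (2 * i ^ 2) - (√(2 * π))⁻¹ / i| ≤ 1 / (i : ℝ) ^ 2 := by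
  have hup := pi_mul_mul_centralBinom_div_four_pow_sq_le (2 * i ^ 2)
  have hlow := two_le_pi_mul_mul_centralBinom_div_four_pow_sq (2 * i ^ 2)
  push_cast at hup hlow
  set p : ℝ := ((2 * i ^ 2).centralBinom : ℝ) / 4 ^ (2 * i ^ 2)
  set s := √(2 * π)
  have hx : (1 : ℝ) ≤ i := by exact_mod_cast Nat.one_le_iff_ne_zero.mpr hi
  have hs : s ^ 2 = 2 * π := sq_sqrt (by positivity)
  have hs1 : 1 ≤ s := by nlinarith [sqrt_nonneg (2 * π), pi_gt_three]
  -- `u` is `p` relative to its predicted value `1 / (s i)`.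
  set u := s * i * p
  have hu_sq : u ^ 2 = 2 * π * i ^ 2 * p ^ 2 := by rw [mul_pow, mul_pow, hs]
  have hu0 : 0 ≤ u := by positivity
  have hu1 : u ≤ 1 := by nlinarith
  have hu2 : (4 * i ^ 2 + 1) * (1 - u ^ 2) ≤ 1 := by nlinarith
  have hgap : i * (1 - u) ≤ 1 :=
    calc i * (1 - u) ≤ (4 * i ^ 2 + 1) * (1 - u ^ 2) :=
          mul_le_mul (by nlinarith) (by nlinarith) (by linarith) (by positivity)
      _ ≤ 1 := hu2
  have heq : p - s⁻¹ / i = -((1 - u) / (s * i)) := by field_simp; ring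
  rw [heq, abs_neg, abs_of_nonneg (by positivity), div_le_div_iff₀ (by positivity) (by positivity)]
  nlinarith

lemma abs_harmonic_sub_log_le_one (N : ℕ) : |(harmonic N : ℝ) - log N| ≤ 1 := by
  have hlog : log N ≤ log (N + 1 : ℕ) := by
    rcases N.eq_zero_or_pos with rfl | hN
    · simp
    · exact log_le_log (by exact_mod_cast hN) (by push_cast; linarith)
  rw [abs_le]
  constructor
  · linarith [log_add_one_le_harmonic N]
  · linarith [harmonic_le_one_add_log N]

lemma abs_sum_Icc_sub_mul_log_le {f : ℕ → ℝ} {c : ℝ}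
    (hf : ∀ i, i ≠ 0 → |f i - c / i| ≤ 1 / (i : ℝ) ^ 2) (N : ℕ) :
    |∑ i ∈ Icc 1 N, f i - c * log N| ≤ 2 + |c| := by
  have hharm : ∑ i ∈ Icc 1 N, c / i = c * harmonic N := by
    simp [harmonic_eq_sum_Icc, mul_sum, div_eq_mul_inv]
  have herr : |∑ i ∈ Icc 1 N, (f i - c / i)| ≤ 2 :=
    calc |∑ i ∈ Icc 1 N, (f i - c / i)| ≤ ∑ i ∈ Icc 1 N, |f i - c / i| := abs_sum_le_sum_abs _ _
      _ ≤ ∑ i ∈ Ioo 0 (N + 1), ((i : ℝ) ^ 2)⁻¹ := by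
          rw [show Ioo 0 (N + 1) = Icc 1 N by ext; simp; omega]
          exact sum_le_sum fun i hi => (hf i (by simp at hi; omega)).trans_eq (one_div _)
      _ ≤ 2 := by simpa using sum_Ioo_inv_sq_le (α := ℝ) 0 (N + 1)
  calc |∑ i ∈ Icc 1 N, f i - c * log N|
      = |∑ i ∈ Icc 1 N, (f i - c / i) + c * (harmonic N - log N)| := by
        rw [sum_sub_distrib, hharm]; ring_nf
    _ ≤ |∑ i ∈ Icc 1 N, (f i - c / i)| + |c| * |(harmonic N : ℝ) - log N| := by
        rw [← abs_mul]; exact abs_add_le _ _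
    _ ≤ 2 + |c| * 1 := by gcongr; exact abs_harmonic_sub_log_le_one N
    _ = 2 + |c| := by rw [mul_one]

lemma integral_sum_indicator_one {Ω ι : Type*} [MeasurableSpace Ω] {μ : Measure Ω}
    [IsFiniteMeasure μ] {s : ι → Set Ω} (hs : ∀ i, MeasurableSet (s i)) (I : Finset ι) :
    ∫ ω, ∑ i ∈ I, (s i).indicator 1 ω ∂μ = ∑ i ∈ I, μ.real (s i) := by
  rw [integral_finsetSum _ fun i _ => (integrable_const 1).indicator (hs i)]
  exact sum_congr rfl fun i _ => integral_indicator_one (hs i)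

theorem expected_diagonal_zeros
{Ω : Type*} [MeasurableSpace Ω] (μ : MeasureTheory.Measure Ω)
    [MeasureTheory.IsProbabilityMeasure μ]
    (X : ℕ × ℕ → Ω → ℤ) (hmeasX : ∀ q, Measurable (X q))
    (hindepX : ProbabilityTheory.iIndepFun X μ)
    (hdistX : ∀ q, μ {ω | X q ω = 1} = 1/2 ∧ μ {ω | X q ω = -1} = 1/2)
    (S : ℕ → ℕ → Ω → ℤ)
    (hS : ∀ n m ω, S n m ω = ∑ i ∈ Finset.range n, ∑ j ∈ Finset.range m, X (i, j) ω)
(δ : ℕ → Ω → ℝ)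
    (hδ : ∀ N ω, δ N ω = ∑ i ∈ Finset.Icc 1 N, if S (2*i) (2*i) ω = 0 then (1:ℝ) else 0) :
    ∃ C : ℝ, ∀ N : ℕ, 1 ≤ N →
      |(∫ ω, δ N ω ∂μ) - (2*Real.pi) ^ (-(1/2) : ℝ) * Real.log N| ≤ C := by
  set diagZero : ℕ → Set Ω := fun i => {ω | ∑ q ∈ range (2 * i) ×ˢ range (2 * i), X q ω = 0}
  have hδ' (N : ℕ) (ω : Ω) : δ N ω = ∑ i ∈ Icc 1 N, (diagZero i).indicator 1 ω := by
    simp [diagZero, hδ, hS, sum_product, Set.indicator_apply]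
  have hmeas (i : ℕ) : MeasurableSet (diagZero i) :=
    (Finset.measurable_sum _ fun q _ => hmeasX q) (measurableSet_singleton 0)
  have hexp (N : ℕ) :
      ∫ ω, δ N ω ∂μ = ∑ i ∈ Icc 1 N, ((2 * i ^ 2).centralBinom : ℝ) / 4 ^ (2 * i ^ 2) := by
    simp_rw [hδ', integral_sum_indicator_one hmeas]
    refine sum_congr rfl fun i _ => ?_
    rw [measureReal_def, measure_sum_eq_simpleWalkMass hmeasX hindepX hdistX, card_product,
      card_range, show 2 * i * (2 * i) = 2 * (2 * i ^ 2) by ring, simpleWalkMass_two_mul_zero]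
    simp
  refine ⟨2 + |(2 * π) ^ (-(1 / 2) : ℝ)|, fun N _ => ?_⟩
  rw [hexp, rpow_neg (by positivity), ← sqrt_eq_rpow]
  exact abs_sum_Icc_sub_mul_log_le (fun i hi => abs_centralBinom_two_mul_sq_div_four_pow_sub_le hi) N
end

section
/- The double series Σ_{1 ≤ i < j < ∞, j < 2i} i / (j^3 (j−i)^{3/2}) converges. -/
/-!
Since `i ≤ j`, the term is at most `i⁻² (j - i)^(-3/2)`, and `(i, j) ↦ (i, j - i)` is injective,
so the series is dominated by the product of the convergent `p`-series for `p = 2` and `p = 3/2`.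
-/

open Real

lemma summable_one_div_rpow_mul_one_div_rpow {p q : ℝ} (hp : 1 < p) (hq : 1 < q) :
    Summable (fun x : ℕ × ℕ => 1 / (x.1 : ℝ) ^ p * (1 / (x.2 : ℝ) ^ q)) :=
  (summable_one_div_nat_rpow.mpr hp).mul_of_nonneg (summable_one_div_nat_rpow.mpr hq)
    (fun _ => by positivity) (fun _ => by positivity)

lemma injOn_fst_sub : Set.InjOn (fun q : ℕ × ℕ => (q.1, q.2 - q.1)) {q | q.1 ≤ q.2} := by
  rintro ⟨a, b⟩ hab ⟨c, d⟩ hcd h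
  simp only [Set.mem_ofPred_eq, Prod.mk.injEq] at hab hcd h ⊢
  omega

lemma div_pow_succ_le_one_div_pow {x y : ℝ} (hx : 0 < x) (hxy : x ≤ y) (n : ℕ) :
    x / y ^ (n + 1) ≤ 1 / x ^ n :=
  calc x / y ^ (n + 1) ≤ x / x ^ (n + 1) := by gcongr
    _ = 1 / x ^ n := by field_simp; ring

lemma div_pow_three_mul_rpow_le {x y : ℝ} (hx : 0 < x) (hxy : x ≤ y) (s : ℝ) :
    x / (y ^ 3 * (y - x) ^ s) ≤ 1 / x ^ (2 : ℝ) * (1 / (y - x) ^ s) := by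
  rw [← div_div, div_eq_mul_one_div _ ((y - x) ^ s), rpow_two]
  exact mul_le_mul_of_nonneg_right (div_pow_succ_le_one_div_pow hx hxy 2)
    (one_div_nonneg.mpr (rpow_nonneg (by linarith) s))

theorem double_sum_near_diagonal_converges :
    Summable (fun q : {q : ℕ × ℕ // 1 ≤ q.1 ∧ q.1 < q.2 ∧ q.2 < 2 * q.1} =>
      (q.val.1 : ℝ) / ((q.val.2 : ℝ)^3 * ((q.val.2 : ℝ) - (q.val.1 : ℝ)) ^ ((3:ℝ)/2))) := by
  have hinj := (injOn_fst_sub.mono (s₁ := {q : ℕ × ℕ | 1 ≤ q.1 ∧ q.1 < q.2 ∧ q.2 < 2 * q.1})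
    fun _ hq => hq.2.1.le).injective
  have hmajorant := (summable_one_div_rpow_mul_one_div_rpow one_lt_two
    (by norm_num : (1 : ℝ) < 3 / 2)).comp_injective hinj
  refine hmajorant.of_nonneg_of_le (fun ⟨⟨i, j⟩, _, hij, _⟩ => ?_)
    (fun ⟨⟨i, j⟩, hi, hij, _⟩ => ?_)
  · have : (0 : ℝ) ≤ j - i := sub_nonneg.mpr (by exact_mod_cast hij.le)
    positivity
  · simpa [Nat.cast_sub hij.le] using
      div_pow_three_mul_rpow_le (by exact_mod_cast hi) (by exact_mod_cast hij.le) (3 / 2)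
end

section
/- There exists a constant K > 0 such that for all n ≥ 1 and all positive even integers x ≤ 2n, P(W_{2n} = x | W_{2n} ≥ x) ≥ K/√n. -/
/-!
Splitting `Ω` (up to a null set) according to which of the first `2n` steps are `+1`, each
pattern has probability `4⁻ⁿ`, so for `x = 2k` the conditional probability is
`C(2n, n+k) / ∑_{m ≥ n+k} C(2n, m)`. For `m ≥ n + j` the ratio `C(2n, m+1) / C(2n, m)` is at
most `(n-j)/(n+j+1)`; summing this over the tail bounds the tail from `n + j` by
`(n+j+1)/(2j+1)` times its first term. With `L = ⌊√n⌋` this bounds the tail from `n + k` by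
`4L · C(2n, n+k)`: directly if `k ≥ L`, and otherwise after splitting off the fewer than `L`
terms below `n + L`, each at most `C(2n, n+k)` since the binomial coefficients decrease past
the middle.
-/

open MeasureTheory ProbabilityTheory Finset

namespace Nat

theorem choose_two_mul_succ_mul_le {n j m : ℕ} (hm : n + j ≤ m) :
    (2 * n).choose (m + 1) * (n + j + 1) ≤ (2 * n).choose m * (n - j) := by
  refine Nat.le_of_mul_le_mul_right ?_ m.succ_pos
  calc (2 * n).choose (m + 1) * (n + j + 1) * (m + 1)
      = (2 * n).choose m * (2 * n - m) * (n + j + 1) := by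
        rw [← choose_succ_right_eq]; ring
    _ ≤ (2 * n).choose m * ((n - j) * (m + 1)) := by
        rw [mul_assoc]; exact Nat.mul_le_mul_left _ (Nat.mul_le_mul (by omega) (by omega))
    _ = (2 * n).choose m * (n - j) * (m + 1) := by ring

theorem antitoneOn_choose_two_mul (n : ℕ) :
    AntitoneOn (fun m => (2 * n).choose m) (Set.Ici n) :=
  antitoneOn_nat_Ici_of_succ_le fun m hm => Nat.le_of_mul_le_mul_right
    ((choose_two_mul_succ_mul_le (j := 0) (by simpa using hm)).trans
      (Nat.mul_le_mul_left _ n.le_succ)) n.succ_pos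

theorem two_mul_add_one_mul_sum_choose_le {n j : ℕ} (hj : j ≤ n) :
    (2 * j + 1) * ∑ m ∈ Ico (n + j) (2 * n + 1), (2 * n).choose m
      ≤ (n + j + 1) * (2 * n).choose (n + j) := by
  have hshift : ∑ m ∈ Ico (n + j) (2 * n + 1), (2 * n).choose (m + 1) + (2 * n).choose (n + j)
      = ∑ m ∈ Ico (n + j) (2 * n + 1), (2 * n).choose m := by
    rw [sum_Ico_add', sum_Ico_succ_top (by omega), choose_eq_zero_of_lt (by omega), add_zero,
      add_comm, ← sum_eq_sum_Ico_succ_bot (by omega)]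
  have hratio : (∑ m ∈ Ico (n + j) (2 * n + 1), (2 * n).choose (m + 1)) * (n + j + 1)
      ≤ (∑ m ∈ Ico (n + j) (2 * n + 1), (2 * n).choose m) * (n - j) := by
    rw [sum_mul, sum_mul]
    exact sum_le_sum fun m hm => choose_two_mul_succ_mul_le (mem_Ico.1 hm).1
  rw [show n + j + 1 = (n - j) + (2 * j + 1) by omega, ← hshift] at hratio ⊢
  generalize ∑ m ∈ Ico (n + j) (2 * n + 1), (2 * n).choose (m + 1) = S at hratio ⊢
  linarith

theorem sum_choose_le_four_mul_sqrt_mul_choose {n k : ℕ} (hk : 1 ≤ k) (hkn : k ≤ n) :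
    ∑ m ∈ Ico (n + k) (2 * n + 1), (2 * n).choose m ≤ 4 * n.sqrt * (2 * n).choose (n + k) := by
  set L := n.sqrt
  have hL1 : 1 ≤ L := Nat.le_sqrt.2 (by omega)
  have hn_lt : n < (L + 1) * (L + 1) := Nat.lt_succ_sqrt n
  rcases le_or_gt L k with hLk | hkL
  · refine Nat.le_of_mul_le_mul_left ?_ (by omega : 0 < 2 * k + 1)
    calc (2 * k + 1) * _ ≤ (n + k + 1) * (2 * n).choose (n + k) :=
          two_mul_add_one_mul_sum_choose_le hkn
      _ ≤ (2 * k + 1) * (4 * L * (2 * n).choose (n + k)) := by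
          rw [← mul_assoc]; gcongr; nlinarith
  · have hL_le : L ≤ n := Nat.sqrt_le_self n
    rw [← sum_Ico_consecutive _ (by omega : n + k ≤ n + L) (by omega : n + L ≤ 2 * n + 1)]
    have hblock : ∑ m ∈ Ico (n + k) (n + L), (2 * n).choose m ≤ L * (2 * n).choose (n + k) := by
      refine (sum_le_card_nsmul _ _ ((2 * n).choose (n + k)) fun m hm => ?_).trans ?_
      · exact antitoneOn_choose_two_mul n (by simp) (by simp at hm ⊢; omega)
          (mem_Ico.1 hm).1
      · simp only [card_Ico, smul_eq_mul]; gcongr; omega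
    have hanti : (2 * n).choose (n + L) ≤ (2 * n).choose (n + k) :=
      antitoneOn_choose_two_mul n (by simp) (by simp) (by omega)
    have htail : ∑ m ∈ Ico (n + L) (2 * n + 1), (2 * n).choose m
        ≤ (L + 1) * (2 * n).choose (n + k) := by
      refine Nat.le_of_mul_le_mul_left ?_ (by omega : 0 < 2 * L + 1)
      calc (2 * L + 1) * _ ≤ (n + L + 1) * (2 * n).choose (n + L) :=
            two_mul_add_one_mul_sum_choose_le hL_le
        _ ≤ (2 * L + 1) * ((L + 1) * (2 * n).choose (n + k)) := by
            rw [← mul_assoc]; gcongr; nlinarith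
    nlinarith

end Nat

namespace Finset

variable {α : Type*}

theorem card_filter_powerset_card_eq (u : Finset α) (m : ℕ) :
    #{s ∈ u.powerset | #s = m} = (#u).choose m := by
  rw [← powersetCard_eq_filter, card_powersetCard]

theorem card_filter_powerset_le_card [DecidableEq α] (u : Finset α) (a : ℕ) :
    #{s ∈ u.powerset | a ≤ #s} = ∑ m ∈ Ico a (#u + 1), (#u).choose m := by
  rw [card_eq_sum_card_fiberwise (f := card) (t := Ico a (#u + 1)) fun s hs => ?_]
  · refine sum_congr rfl fun m hm => ?_
    rw [filter_filter, ← card_filter_powerset_card_eq u m]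
    exact congrArg card (filter_congr fun s _ => by rw [mem_Ico] at hm; omega)
  · simp only [coe_filter, mem_powerset, Set.mem_ofPred, coe_Ico, Set.mem_Ico] at hs ⊢
    have := card_le_card hs.1
    omega

end Finset

section

variable {Ω : Type*} {ξ : ℕ → Ω → ℤ}

def pathEvent (ξ : ℕ → Ω → ℤ) (N : ℕ) (s : Finset ℕ) : Set Ω :=
  ⋂ i ∈ range N, ξ i ⁻¹' {if i ∈ s then 1 else -1}

theorem mem_pathEvent_filter {N : ℕ} {ω : Ω} (hω : ∀ i, ξ i ω = 1 ∨ ξ i ω = -1) :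
    ω ∈ pathEvent ξ N {i ∈ range N | ξ i ω = 1} := by
  simp only [pathEvent, Set.mem_iInter, Set.mem_preimage, Set.mem_singleton_iff, mem_filter]
  intro i hi
  rcases hω i with h | h <;> simp [h, hi]

theorem eq_filter_of_mem_pathEvent {N : ℕ} {s : Finset ℕ} (hs : s ⊆ range N) {ω : Ω}
    (hω : ω ∈ pathEvent ξ N s) : s = {i ∈ range N | ξ i ω = 1} := by
  simp only [pathEvent, Set.mem_iInter, Set.mem_preimage, Set.mem_singleton_iff] at hω
  ext i
  simp only [mem_filter]
  constructor
  · intro hi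
    exact ⟨hs hi, by simpa [hi] using hω i (hs hi)⟩
  · rintro ⟨hiN, hi⟩
    by_contra his
    have := hω i hiN
    rw [if_neg his] at this
    omega

theorem sum_eq_of_mem_pathEvent {N : ℕ} {s : Finset ℕ} (hs : s ⊆ range N) {ω : Ω}
    (hω : ω ∈ pathEvent ξ N s) : ∑ i ∈ range N, ξ i ω = 2 * #s - N := by
  simp only [pathEvent, Set.mem_iInter, Set.mem_preimage, Set.mem_singleton_iff] at hω
  rw [sum_congr rfl hω, sum_ite, sum_const, sum_const, filter_mem_eq_inter,
    inter_eq_right.2 hs, filter_notMem_eq_sdiff, card_sdiff_of_subset hs, card_range,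
    nsmul_eq_mul, nsmul_eq_mul, Nat.cast_sub (card_range N ▸ card_le_card hs)]
  ring

variable [MeasurableSpace Ω] {μ : Measure Ω}

theorem measurableSet_pathEvent (hmeas : ∀ i, Measurable (ξ i)) (N : ℕ) (s : Finset ℕ) :
    MeasurableSet (pathEvent ξ N s) :=
  (range N).measurableSet_biInter fun i _ => hmeas i (measurableSet_singleton _)

theorem measure_pathEvent (hindep : iIndepFun ξ μ)
    (hdist : ∀ i, μ {ω | ξ i ω = 1} = 1 / 2 ∧ μ {ω | ξ i ω = -1} = 1 / 2) (N : ℕ)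
    (s : Finset ℕ) : μ (pathEvent ξ N s) = 2⁻¹ ^ N := by
  rw [pathEvent, hindep.measure_inter_preimage_eq_mul _ fun _ _ => measurableSet_singleton _,
    prod_congr rfl (g := fun _ => 2⁻¹) fun i _ => ?_, prod_const, card_range]
  split_ifs
  · exact (hdist i).1.trans (one_div 2)
  · exact (hdist i).2.trans (one_div 2)

theorem ae_eq_one_or_eq_neg_one_s14 [IsProbabilityMeasure μ] (hmeas : ∀ i, Measurable (ξ i))
    (hdist : ∀ i, μ {ω | ξ i ω = 1} = 1 / 2 ∧ μ {ω | ξ i ω = -1} = 1 / 2) (i : ℕ) :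
    ∀ᵐ ω ∂μ, ξ i ω = 1 ∨ ξ i ω = -1 := by
  have hmeas1 : MeasurableSet {ω | ξ i ω = 1} := hmeas i (measurableSet_singleton 1)
  have hmeas2 : MeasurableSet {ω | ξ i ω = -1} := hmeas i (measurableSet_singleton (-1))
  have hdisj : Disjoint {ω | ξ i ω = 1} {ω | ξ i ω = -1} :=
    Set.disjoint_left.2 fun ω h1 h2 => by simp_all
  have hfull : μ ({ω | ξ i ω = 1} ∪ {ω | ξ i ω = -1}) = μ Set.univ := by
    rw [measure_union hdisj hmeas2, (hdist i).1, (hdist i).2, ENNReal.add_halves, measure_univ]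
  filter_upwards [(ae_iff_measure_eq (hmeas1.union hmeas2).nullMeasurableSet).2 hfull] with ω hω
  exact hω

theorem measure_sum_range_eq_card_mul [IsProbabilityMeasure μ] (hmeas : ∀ i, Measurable (ξ i))
    (hindep : iIndepFun ξ μ)
    (hdist : ∀ i, μ {ω | ξ i ω = 1} = 1 / 2 ∧ μ {ω | ξ i ω = -1} = 1 / 2) (N : ℕ)
    (p : ℤ → Prop) [DecidablePred p] :
    μ {ω | p (∑ i ∈ range N, ξ i ω)} = #{s ∈ (range N).powerset | p (2 * #s - N)} * 2⁻¹ ^ N := by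
  set F := {s ∈ (range N).powerset | p (2 * #s - N)}
  have hae : {ω | p (∑ i ∈ range N, ξ i ω)} =ᵐ[μ] ⋃ s ∈ F, pathEvent ξ N s := by
    refine Filter.eventuallyEq_set.2 ?_
    filter_upwards [ae_all_iff.2 (ae_eq_one_or_eq_neg_one_s14 hmeas hdist)] with ω hω
    simp only [Set.mem_iUnion, exists_prop, F, mem_filter, mem_powerset]
    constructor
    · intro hp
      have hpath := mem_pathEvent_filter (N := N) hω
      refine ⟨_, ⟨filter_subset _ _, ?_⟩, hpath⟩
      rwa [← sum_eq_of_mem_pathEvent (filter_subset _ _) hpath]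
    · rintro ⟨s, ⟨hs, hp⟩, hpath⟩
      rwa [sum_eq_of_mem_pathEvent hs hpath]
  have hdisj : (F : Set (Finset ℕ)).PairwiseDisjoint (pathEvent ξ N) := by
    intro s hs t ht hst
    simp only [coe_filter, mem_powerset, F] at hs ht
    exact Set.disjoint_left.2 fun ω hωs hωt =>
      hst ((eq_filter_of_mem_pathEvent hs.1 hωs).trans (eq_filter_of_mem_pathEvent ht.1 hωt).symm)
  rw [measure_congr hae, measure_biUnion_finset hdisj fun s _ => measurableSet_pathEvent hmeas N s,
    sum_congr rfl fun s _ => measure_pathEvent hindep hdist N s, sum_const, nsmul_eq_mul]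

theorem toReal_cond_eq_choose_div_sum_choose [IsProbabilityMeasure μ]
    (hmeas : ∀ i, Measurable (ξ i)) (hindep : iIndepFun ξ μ)
    (hdist : ∀ i, μ {ω | ξ i ω = 1} = 1 / 2 ∧ μ {ω | ξ i ω = -1} = 1 / 2) (n k : ℕ) :
    (cond μ {ω | 2 * (k : ℤ) ≤ ∑ i ∈ range (2 * n), ξ i ω}
        {ω | ∑ i ∈ range (2 * n), ξ i ω = 2 * k}).toReal
      = (2 * n).choose (n + k) / ∑ m ∈ Ico (n + k) (2 * n + 1), (2 * n).choose m := by
  have hlevel : μ {ω | ∑ i ∈ range (2 * n), ξ i ω = 2 * k}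
      = (2 * n).choose (n + k) * 2⁻¹ ^ (2 * n) := by
    rw [measure_sum_range_eq_card_mul hmeas hindep hdist _ (· = 2 * (k : ℤ)),
      filter_congr fun s _ => show 2 * (#s : ℤ) - (2 * n : ℕ) = 2 * k ↔ #s = n + k by omega,
      card_filter_powerset_card_eq, card_range]
  have htail : μ {ω | 2 * (k : ℤ) ≤ ∑ i ∈ range (2 * n), ξ i ω}
      = (∑ m ∈ Ico (n + k) (2 * n + 1), (2 * n).choose m : ℕ) * 2⁻¹ ^ (2 * n) := by
    rw [measure_sum_range_eq_card_mul hmeas hindep hdist _ (2 * (k : ℤ) ≤ ·),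
      filter_congr fun s _ => show 2 * (k : ℤ) ≤ 2 * (#s : ℤ) - (2 * n : ℕ) ↔ n + k ≤ #s by omega,
      card_filter_powerset_le_card, card_range]
  have hsub : {ω | ∑ i ∈ range (2 * n), ξ i ω = 2 * k}
      ⊆ {ω | 2 * (k : ℤ) ≤ ∑ i ∈ range (2 * n), ξ i ω} := fun ω hω => hω.symm.le
  have hmeasTail : MeasurableSet {ω | 2 * (k : ℤ) ≤ ∑ i ∈ range (2 * n), ξ i ω} :=
    (measurable_sum _ fun i _ => hmeas i) measurableSet_Ici
  rw [cond_apply hmeasTail, Set.inter_eq_self_of_subset_right hsub, hlevel, htail]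
  simp only [ENNReal.toReal_mul, ENNReal.toReal_inv, ENNReal.toReal_natCast, ENNReal.toReal_pow,
    ENNReal.toReal_ofNat]
  field_simp

end

theorem conditional_hit_exact_level
{Ω : Type*} [MeasurableSpace Ω] (μ : MeasureTheory.Measure Ω)
    [MeasureTheory.IsProbabilityMeasure μ]
    (ξ : ℕ → Ω → ℤ) (hmeasξ : ∀ i, Measurable (ξ i))
    (hindepξ : ProbabilityTheory.iIndepFun ξ μ)
    (hdistξ : ∀ i, μ {ω | ξ i ω = 1} = 1/2 ∧ μ {ω | ξ i ω = -1} = 1/2)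
    (W : ℕ → Ω → ℤ) (hW : ∀ n ω, W n ω = ∑ i ∈ Finset.range n, ξ i ω) :
    ∃ K : ℝ, 0 < K ∧ ∀ n : ℕ, 1 ≤ n → ∀ x : ℤ, Even x → 0 < x → x ≤ 2*n →
      K / Real.sqrt n
        ≤ ((ProbabilityTheory.cond μ {ω | x ≤ W (2*n) ω})
            {ω | W (2*n) ω = x}).toReal := by
  refine ⟨1 / 4, by norm_num, fun n hn x hx hx0 hxn => ?_⟩
  obtain ⟨k, rfl⟩ : ∃ k : ℕ, x = 2 * k := by
    obtain ⟨r, rfl⟩ := hx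
    exact ⟨r.toNat, by omega⟩
  have hk : 1 ≤ k := by omega
  have hkn : k ≤ n := by omega
  simp only [hW]
  rw [toReal_cond_eq_choose_div_sum_choose hmeasξ hindepξ hdistξ n k]
  have hlevel : (0 : ℝ) < (2 * n).choose (n + k) := by exact_mod_cast Nat.choose_pos (by omega)
  have htail : ((∑ m ∈ Ico (n + k) (2 * n + 1), (2 * n).choose m : ℕ) : ℝ)
      ≤ 4 * n.sqrt * (2 * n).choose (n + k) := by
    exact_mod_cast Nat.sum_choose_le_four_mul_sqrt_mul_choose hk hkn
  have htail_pos : (0 : ℝ) < (∑ m ∈ Ico (n + k) (2 * n + 1), (2 * n).choose m : ℕ) :=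
    hlevel.trans_le (by exact_mod_cast single_le_sum (fun _ _ => Nat.zero_le _) (by simp; omega))
  have hsqrt : (n.sqrt : ℝ) ≤ √n := Real.nat_sqrt_le_real_sqrt
  rw [div_le_div_iff₀ (by positivity) htail_pos]
  nlinarith
end

section
/- Let J_1, …, J_n be {0,1}-valued random variables such that E(J_{k+1} | J_1,…,J_k) ≥ η almost surely for all 0 ≤ k ≤ n−1, where η > 0 is nonrandom. Then for all λ ∈ (0,η), P(Σ_{i=1}^n J_i ≤ λn) ≤ exp(−n(η−λ)^2/(2η)). -/
/-!
Write `S_k = J_0 + ⋯ + J_{k-1}` and fix `t ≥ 0`. Since `J_k ∈ {0, 1}`,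
`exp (-t S_{k+1}) = exp (-t S_k) (1 - (1 - e^{-t}) J_k)`, and conditioning on `J_0, …, J_{k-1}`
gives `E exp (-t S_{k+1}) ≤ (1 - η (1 - e^{-t})) E exp (-t S_k)`. Hence
`E exp (-t S_n) ≤ exp (-n η (1 - e^{-t}))`, and the Chernoff bound with `t = (η - λ) / η` together
with `1 - e^{-t} ≥ t - t² / 2` yields the claim.
-/

open MeasureTheory ProbabilityTheory Real Finset

lemma Real.exp_neg_le_one_sub_add_sq_div_two {t : ℝ} (ht : 0 ≤ t) :
    exp (-t) ≤ 1 - t + t ^ 2 / 2 := by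
  have h := quadratic_le_exp_of_nonneg ht
  have h_inv : exp (-t) * exp t = 1 := by rw [← exp_add, neg_add_cancel, exp_zero]
  nlinarith [exp_pos t, exp_pos (-t), sq_nonneg t, sq_nonneg (t ^ 2)]

lemma Real.exp_neg_mul_add_of_eq_zero_or_eq_one {x : ℝ} (hx : x = 0 ∨ x = 1) (t s : ℝ) :
    exp (-t * (s + x)) = exp (-t * s) - (1 - exp (-t)) * (exp (-t * s) * x) := by
  rcases hx with rfl | rfl
  · simp
  · rw [mul_add, mul_one, exp_add]; ring

/-- The Chernoff exponent at the optimising choice `t = (η - λ) / η`. -/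
lemma chernoff_exponent_le {η lam : ℝ} (hη : 0 < η) (hlamη : lam < η) :
    (η - lam) / η * lam - η * (1 - exp (-((η - lam) / η))) ≤ -(η - lam) ^ 2 / (2 * η) := by
  set t := (η - lam) / η with ht_def
  have ht : 0 ≤ t := div_nonneg (by linarith) hη.le
  have hexp := exp_neg_le_one_sub_add_sq_div_two ht
  have key : t * lam - η * (t - t ^ 2 / 2) = -(η - lam) ^ 2 / (2 * η) := by
    rw [ht_def]; field_simp; ring
  linarith [mul_le_mul_of_nonneg_left hexp hη.le]

section CondExp

variable {Ω : Type*} {m m0 : MeasurableSpace Ω} {μ : Measure Ω}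

lemma mul_integral_le_integral_mul_of_le_condExp (hm : m ≤ m0) [SigmaFinite (μ.trim hm)]
    {X Y : Ω → ℝ} {η : ℝ} (hX : StronglyMeasurable[m] X) (hX0 : 0 ≤ᵐ[μ] X)
    (hXint : Integrable X μ) (hY : Integrable Y μ) (hXY : Integrable (X * Y) μ)
    (hη : ∀ᵐ ω ∂μ, η ≤ μ[Y | m] ω) :
    η * ∫ ω, X ω ∂μ ≤ ∫ ω, X ω * Y ω ∂μ := by
  have hpull : μ[X * Y | m] =ᵐ[μ] X * μ[Y | m] :=
    condExp_mul_of_stronglyMeasurable_left hX hXY hY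
  calc η * ∫ ω, X ω ∂μ = ∫ ω, η * X ω ∂μ := (integral_const_mul η X).symm
    _ ≤ ∫ ω, (X * μ[Y | m]) ω ∂μ := by
        refine integral_mono_ae (hXint.const_mul η) (integrable_condExp.congr hpull) ?_
        filter_upwards [hη, hX0] with ω hηω hXω
        rw [Pi.mul_apply, mul_comm]
        exact mul_le_mul_of_nonneg_left hηω hXω
    _ = ∫ ω, (μ[X * Y | m]) ω ∂μ := integral_congr_ae hpull.symm
    _ = ∫ ω, X ω * Y ω ∂μ := integral_condExp hm

end CondExp

section Bernoulli

variable {Ω : Type*} {J : ℕ → Ω → ℝ}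

lemma measurable_sum_range_iSup_comap (k : ℕ) :
    Measurable[⨆ i ∈ range k, MeasurableSpace.comap (J i) inferInstance]
      (fun ω => ∑ i ∈ range k, J i ω) :=
  Finset.measurable_sum _ fun i hi => Measurable.of_comap_le <|
    le_iSup₂ (f := fun i (_ : i ∈ range k) => MeasurableSpace.comap (J i) inferInstance) i hi

variable [MeasurableSpace Ω] {μ : Measure Ω}

lemma integrable_exp_neg_mul_sum [IsFiniteMeasure μ] (hmeas : ∀ k, Measurable (J k))
    (hJ : ∀ k ω, 0 ≤ J k ω) {t : ℝ} (ht : 0 ≤ t) (n : ℕ) :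
    Integrable (fun ω => exp (-t * ∑ i ∈ range n, J i ω)) μ := by
  refine .of_bound ((measurable_sum _ fun i _ => hmeas i).const_mul (-t)).exp.aestronglyMeasurable
    1 (ae_of_all _ fun ω => ?_)
  rw [norm_of_nonneg (exp_pos _).le, exp_le_one_iff]
  exact mul_nonpos_of_nonpos_of_nonneg (by linarith) (sum_nonneg fun i _ => hJ i ω)

lemma integral_exp_neg_mul_sum_succ_le [IsFiniteMeasure μ] (hmeas : ∀ k, Measurable (J k))
    (h01 : ∀ k ω, J k ω = 0 ∨ J k ω = 1) {η t : ℝ} (ht : 0 ≤ t) (n : ℕ)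
    (hcond : ∀ᵐ ω ∂μ,
      η ≤ (μ[J n | ⨆ i ∈ range n, MeasurableSpace.comap (J i) inferInstance]) ω) :
    ∫ ω, exp (-t * ∑ i ∈ range (n + 1), J i ω) ∂μ
      ≤ (1 - η * (1 - exp (-t))) * ∫ ω, exp (-t * ∑ i ∈ range n, J i ω) ∂μ := by
  set X : Ω → ℝ := fun ω => exp (-t * ∑ i ∈ range n, J i ω)
  set c := 1 - exp (-t)
  have hc : 0 ≤ c := sub_nonneg.2 (exp_le_one_iff.2 (by linarith))
  have hJ : ∀ k ω, 0 ≤ J k ω ∧ J k ω ≤ 1 := fun k ω => by rcases h01 k ω with h | h <;> simp [h]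
  have hm : ⨆ i ∈ range n, MeasurableSpace.comap (J i) inferInstance ≤ ‹MeasurableSpace Ω› :=
    iSup₂_le fun i _ => (hmeas i).comap_le
  have hX_meas : StronglyMeasurable[⨆ i ∈ range n, MeasurableSpace.comap (J i) inferInstance] X :=
    ((measurable_sum_range_iSup_comap n).const_mul (-t)).exp.stronglyMeasurable
  have hXint : Integrable X μ := integrable_exp_neg_mul_sum hmeas (fun k ω => (hJ k ω).1) ht n
  have hJ_bound : ∀ᵐ ω ∂μ, ‖J n ω‖ ≤ 1 := ae_of_all _ fun ω => by
    rw [norm_of_nonneg (hJ n ω).1]; exact (hJ n ω).2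
  have hJint : Integrable (J n) μ := .of_bound (hmeas n).aestronglyMeasurable 1 hJ_bound
  have hXJint : Integrable (X * J n) μ := hXint.mul_bdd (hmeas n).aestronglyMeasurable hJ_bound
  have hstep : η * ∫ ω, X ω ∂μ ≤ ∫ ω, X ω * J n ω ∂μ :=
    mul_integral_le_integral_mul_of_le_condExp hm hX_meas
      (ae_of_all _ fun ω => (exp_pos _).le) hXint hJint hXJint hcond
  have hsplit : ∫ ω, exp (-t * ∑ i ∈ range (n + 1), J i ω) ∂μ
      = ∫ ω, X ω ∂μ - c * ∫ ω, X ω * J n ω ∂μ := by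
    simp_rw [sum_range_succ, exp_neg_mul_add_of_eq_zero_or_eq_one (h01 n _)]
    exact (integral_sub hXint (hXJint.const_mul c)).trans (by rw [integral_const_mul]; rfl)
  rw [hsplit]
  nlinarith [mul_le_mul_of_nonneg_left hstep hc]

lemma integral_exp_neg_mul_sum_le [IsProbabilityMeasure μ] (hmeas : ∀ k, Measurable (J k))
    (h01 : ∀ k ω, J k ω = 0 ∨ J k ω = 1) {η t : ℝ} (ht : 0 ≤ t) (n : ℕ)
    (hcond : ∀ k < n, ∀ᵐ ω ∂μ,
      η ≤ (μ[J k | ⨆ i ∈ range k, MeasurableSpace.comap (J i) inferInstance]) ω) :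
    ∫ ω, exp (-t * ∑ i ∈ range n, J i ω) ∂μ ≤ exp (-(η * (1 - exp (-t)))) ^ n := by
  induction n with
  | zero => simp
  | succ n ih =>
    calc ∫ ω, exp (-t * ∑ i ∈ range (n + 1), J i ω) ∂μ
        ≤ (1 - η * (1 - exp (-t))) * ∫ ω, exp (-t * ∑ i ∈ range n, J i ω) ∂μ :=
          integral_exp_neg_mul_sum_succ_le hmeas h01 ht n (hcond n n.lt_succ_self)
      _ ≤ exp (-(η * (1 - exp (-t)))) * exp (-(η * (1 - exp (-t)))) ^ n :=
          mul_le_mul (by linarith [add_one_le_exp (-(η * (1 - exp (-t))))])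
            (ih fun k hk => hcond k (hk.trans n.lt_succ_self))
            (integral_nonneg fun ω => (exp_pos _).le) (by positivity)
      _ = exp (-(η * (1 - exp (-t)))) ^ (n + 1) := (pow_succ' _ _).symm

end Bernoulli

theorem bernstein_type_inequality_general
    {Ω : Type*} [MeasurableSpace Ω] (μ : Measure Ω) [IsProbabilityMeasure μ]
    (n : ℕ) (J : ℕ → Ω → ℝ) (hmeas : ∀ k, Measurable (J k))
    (h01 : ∀ k ω, J k ω = 0 ∨ J k ω = 1)
    (η : ℝ) (hη : 0 < η)
    (hcond : ∀ k, k < n → ∀ᵐ ω ∂μ,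
      η ≤ (μ[J k | ⨆ i ∈ Finset.range k, MeasurableSpace.comap (J i) inferInstance]) ω)
    (lam : ℝ) (hlamη : lam < η) :
    (μ {ω | ∑ i ∈ Finset.range n, J i ω ≤ lam * n}).toReal
      ≤ Real.exp (-(n * (η - lam)^2) / (2*η)) := by
  set t := (η - lam) / η
  have ht : 0 ≤ t := div_nonneg (by linarith) hη.le
  have hint : Integrable (fun ω => exp (-t * ∑ i ∈ range n, J i ω)) μ :=
    integrable_exp_neg_mul_sum hmeas (fun k ω => by rcases h01 k ω with h | h <;> simp [h]) ht n
  calc (μ {ω | ∑ i ∈ range n, J i ω ≤ lam * n}).toReal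
      ≤ exp (-(-t) * (lam * n)) * mgf (fun ω => ∑ i ∈ range n, J i ω) μ (-t) :=
        measure_le_le_exp_mul_mgf _ (by linarith) hint
    _ ≤ exp (t * (lam * n)) * exp (-(η * (1 - exp (-t)))) ^ n := by
        rw [neg_neg]
        gcongr
        exact integral_exp_neg_mul_sum_le hmeas h01 ht n hcond
    _ = exp (n * (t * lam - η * (1 - exp (-t)))) := by
        rw [← exp_nat_mul, ← exp_add]
        congr 1
        ring
    _ ≤ exp (-(n * (η - lam) ^ 2) / (2 * η)) := by
        rw [exp_le_exp]
        refine (mul_le_mul_of_nonneg_left (chernoff_exponent_le hη hlamη) n.cast_nonneg).trans_eq ?_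
        ring

theorem bernstein_type_inequality
    {Ω : Type*} [MeasurableSpace Ω] (μ : Measure Ω) [IsProbabilityMeasure μ]
    (n : ℕ) (J : ℕ → Ω → ℝ) (hmeas : ∀ k, Measurable (J k))
    (h01 : ∀ k ω, J k ω = 0 ∨ J k ω = 1)
    (η : ℝ) (hη : 0 < η)
    (hcond : ∀ k, k < n → ∀ᵐ ω ∂μ,
      η ≤ (μ[J k | ⨆ i ∈ Finset.range k, MeasurableSpace.comap (J i) inferInstance]) ω)
    (lam : ℝ) (hlam0 : 0 < lam) (hlamη : lam < η) :
    (μ {ω | ∑ i ∈ Finset.range n, J i ω ≤ lam * n}).toReal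
      ≤ Real.exp (-(n * (η - lam)^2) / (2*η)) :=
  bernstein_type_inequality_general μ n J hmeas h01 η hη hcond lam hlamη
end
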